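/- Let n, k ≥ 1 be integers and let f : S(ℂⁿ) → ℝ^{2k+1} be a continuous map on the unit sphere of ℂⁿ with f(−v) = −f(v) for all v ∈ S(ℂⁿ). Then for any 2k+1 vectors w₀, …, w_{2k} ∈ S(ℂⁿ) there exist signs e₀, …, e_{2k} ∈ {+1, −1}, real numbers λ₀, …, λ_{2k} ≥ 0 with λ₀ + ⋯ + λ_{2k} = 1, and a complex number z with |z| = 1, such that Σ_{i=0}^{2k} λᵢ f(eᵢ·z·wᵢ) = 0, where eᵢ·z·wᵢ denotes scalar multiplication of the vector wᵢ by the complex scalar eᵢz. -/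

import Mathlib

open Metric Module

/-!
The vectors `f (exp (iθ) • wⱼ)` form a square real matrix of odd size `2k + 1`. By oddness of `f`
the matrix at `θ = π` is the negative of the one at `θ = 0`, so its determinant changes sign and,
by the intermediate value theorem, the vectors are linearly dependent for some `θ`. Dividing a
dependence `∑ tⱼ f (z • wⱼ) = 0` by `∑ |tⱼ|` and moving the signs of the `tⱼ` inside `f`, again by
oddness, gives the required convex combination.
-/

theorem Continuous.basis_det {X V ι : Type*} [TopologicalSpace X] [AddCommGroup V] [Module ℝ V]
    [TopologicalSpace V] [IsTopologicalAddGroup V] [ContinuousSMul ℝ V] [T2Space V]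
    [Fintype ι] [DecidableEq ι] (b : Basis ι ℝ V) {g : X → ι → V} (hg : Continuous g) :
    Continuous fun x => b.det (g x) := by
  simp only [Basis.det_apply]
  refine Continuous.matrix_det (continuous_matrix fun i j => ?_)
  simp only [Basis.toMatrix_apply]
  exact (continuous_apply i).comp ((continuous_equivFun_basis b).comp ((continuous_apply j).comp hg))

theorem Module.Basis.det_neg {R M ι : Type*} [CommRing R] [AddCommGroup M] [Module R M]
    [Fintype ι] [DecidableEq ι] (b : Basis ι R M) (v : ι → M) :
    b.det (-v) = (-1) ^ Fintype.card ι * b.det v := by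
  rw [Basis.det_apply, Basis.det_apply, ← Matrix.det_neg]
  congr 1
  ext i j
  simp [Basis.toMatrix_apply]

theorem Module.Basis.det_ne_zero_of_linearIndependent {K M ι : Type*} [Field K] [AddCommGroup M]
    [Module K M] [Fintype ι] [DecidableEq ι] (b : Basis ι K M) {v : ι → M}
    (hv : LinearIndependent K v) : b.det v ≠ 0 := by
  have : FiniteDimensional K M := b.finiteDimensional_of_finite
  exact (b.is_basis_iff_det.1
    ⟨hv, hv.span_eq_top_of_card_eq_finrank' (finrank_eq_card_basis b).symm⟩).ne_zero

theorem exists_mem_uIcc_not_linearIndependent_of_eq_neg {V ι : Type*} [AddCommGroup V]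
    [Module ℝ V] [TopologicalSpace V] [IsTopologicalAddGroup V] [ContinuousSMul ℝ V] [T2Space V]
    [FiniteDimensional ℝ V] [Fintype ι] (hι : Fintype.card ι = finrank ℝ V)
    (hodd : Odd (finrank ℝ V)) {g : ℝ → ι → V} (hg : Continuous g) {a c : ℝ}
    (hgc : g c = -g a) : ∃ θ ∈ Set.uIcc a c, ¬ LinearIndependent ℝ (g θ) := by
  classical
  let b : Basis ι ℝ V := (finBasisOfFinrankEq ℝ V hι.symm).reindex (Fintype.equivFin ι).symm
  have hdet_c : b.det (g c) = -b.det (g a) := by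
    rw [hgc, b.det_neg, hι, hodd.neg_one_pow, neg_one_mul]
  have hzero : (0 : ℝ) ∈ Set.uIcc (b.det (g a)) (b.det (g c)) := by
    rw [hdet_c, Set.mem_uIcc]
    rcases le_total 0 (b.det (g a)) with h | h
    · exact Or.inr ⟨by linarith, h⟩
    · exact Or.inl ⟨h, by linarith⟩
  obtain ⟨θ, hθ, hdet⟩ := intermediate_value_uIcc (hg.basis_det b).continuousOn hzero
  exact ⟨θ, hθ, fun hli => b.det_ne_zero_of_linearIndependent hli hdet⟩

theorem exists_sign_convexCombination_eq_zero_of_not_linearIndependent {𝕜 E ι : Type*} [Field 𝕜]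
    [LinearOrder 𝕜] [IsStrictOrderedRing 𝕜] [AddCommGroup E] [Module 𝕜 E] [Fintype ι]
    {v : ι → E} (hv : ¬ LinearIndependent 𝕜 v) :
    ∃ (e lam : ι → 𝕜), (∀ i, e i = 1 ∨ e i = -1) ∧ (∀ i, 0 ≤ lam i) ∧ ∑ i, lam i = 1 ∧
      ∑ i, lam i • e i • v i = 0 := by
  obtain ⟨t, ht, j, htj⟩ := Fintype.not_linearIndependent_iff.1 hv
  set s := ∑ i, |t i|
  have hs : 0 < s := Finset.sum_pos' (fun i _ => abs_nonneg _) ⟨j, Finset.mem_univ j, abs_pos.2 htj⟩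
  refine ⟨fun i => if 0 ≤ t i then 1 else -1, fun i => |t i| / s, fun i => ?_,
    fun i => by positivity, by rw [← Finset.sum_div, div_self hs.ne'], ?_⟩
  · dsimp only
    split_ifs <;> simp
  · have hterm : ∀ i, (|t i| / s) • (if 0 ≤ t i then (1 : 𝕜) else -1) • v i = s⁻¹ • t i • v i := by
      intro i
      split_ifs with h
      · rw [abs_of_nonneg h, one_smul, smul_smul, div_eq_inv_mul]
      · rw [abs_of_neg (not_le.1 h), smul_smul, smul_smul]
        congr 1
        ring
    simp only [hterm, ← Finset.smul_sum, ht, smul_zero]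

theorem map_sign_smul_of_odd {E F : Type*} [AddCommGroup E] [Module ℂ E] [AddCommGroup F]
    [Module ℝ F] {f : E → F} {s : Set E} (hodd : ∀ v ∈ s, f (-v) = -f v) {v : E} (hv : v ∈ s)
    {e : ℝ} (he : e = 1 ∨ e = -1) : f ((e : ℂ) • v) = e • f v := by
  rcases he with rfl | rfl
  · simp
  · simp [hodd v hv]

theorem stmt6_general (n k : ℕ)
    (f : EuclideanSpace ℂ (Fin n) → EuclideanSpace ℝ (Fin (2 * k + 1)))
    (hf : ContinuousOn f (sphere 0 1))
    (hodd : ∀ v ∈ sphere (0 : EuclideanSpace ℂ (Fin n)) 1, f (-v) = -f v)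
    (w : Fin (2 * k + 1) → EuclideanSpace ℂ (Fin n)) (hw : ∀ i, ‖w i‖ = 1) :
    ∃ (e : Fin (2 * k + 1) → ℝ) (lam : Fin (2 * k + 1) → ℝ) (z : ℂ),
      (∀ i, e i = 1 ∨ e i = -1) ∧ (∀ i, 0 ≤ lam i) ∧ (∑ i, lam i = 1) ∧ ‖z‖ = 1 ∧
      ∑ i, lam i • f (((e i : ℂ) * z) • w i) = 0 := by
  have hmem : ∀ (θ : ℝ) j, Complex.exp (θ * Complex.I) • w j ∈ sphere 0 1 := by
    intro θ j
    simp [norm_smul, Complex.norm_exp_ofReal_mul_I, hw j]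
  set g : ℝ → Fin (2 * k + 1) → EuclideanSpace ℝ (Fin (2 * k + 1)) :=
    fun θ j => f (Complex.exp (θ * Complex.I) • w j)
  have hg : Continuous g :=
    continuous_pi fun j => hf.comp_continuous (by fun_prop) (hmem · j)
  have hgπ : g Real.pi = -g 0 := by
    ext1 j
    simpa [g, Complex.exp_pi_mul_I] using hodd (w j) (by simpa using hw j)
  obtain ⟨θ, -, hθ⟩ := exists_mem_uIcc_not_linearIndependent_of_eq_neg (by simp) (by simp) hg hgπ
  obtain ⟨e, lam, he, hlam, hsum, hzero⟩ :=
    exists_sign_convexCombination_eq_zero_of_not_linearIndependent hθ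
  refine ⟨e, lam, Complex.exp (θ * Complex.I), he, hlam, hsum,
    Complex.norm_exp_ofReal_mul_I θ, ?_⟩
  simpa only [mul_smul, map_sign_smul_of_odd hodd (hmem θ _) (he _)] using hzero

/-- Lemma 2.5 of the paper. For an odd continuous map
`f : S(ℂⁿ) → ℝ^{2k+1}` and any `2k+1` unit vectors `w₀, …, w_{2k}` in `ℂⁿ`, there are
signs `eᵢ ∈ {±1}`, convex coefficients `λᵢ` and a unit complex number `z` with
`∑ λᵢ f((eᵢ z) • wᵢ) = 0`. -/
theorem stmt6 (n k : ℕ) (hn : 1 ≤ n) (hk : 1 ≤ k)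
    (f : EuclideanSpace ℂ (Fin n) → EuclideanSpace ℝ (Fin (2 * k + 1)))
    (hf : ContinuousOn f (sphere 0 1))
    (hodd : ∀ v ∈ sphere (0 : EuclideanSpace ℂ (Fin n)) 1, f (-v) = -f v)
    (w : Fin (2 * k + 1) → EuclideanSpace ℂ (Fin n)) (hw : ∀ i, ‖w i‖ = 1) :
    ∃ (e : Fin (2 * k + 1) → ℝ) (lam : Fin (2 * k + 1) → ℝ) (z : ℂ),
      (∀ i, e i = 1 ∨ e i = -1) ∧ (∀ i, 0 ≤ lam i) ∧ (∑ i, lam i = 1) ∧ ‖z‖ = 1 ∧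
      ∑ i, lam i • f (((e i : ℂ) * z) • w i) = 0 :=
  stmt6_general n k f hf hodd w hw
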